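/- Let d : ℂ × (−ε₀,ε₀) → ℂ satisfy d(z,ε) = z + ε^d·M(z) + O(ε^{d+1}) uniformly on a compact set K ⊆ ℂ, where M is analytic and not identically zero on a connected neighborhood of K. If M has exactly N zeros (counted with multiplicity) in the interior of K and no zeros on its boundary, then for all sufficiently small ε ≠ 0 the function z ↦ d(z,ε) − z has at most N zeros in the interior of K. -/

import Mathlib

/-!
Dividing by `ε ^ n`, the fixed points of `d(·, ε)` are the zeros of `F = (d(·, ε) - id) / ε ^ n`,
which lies within `C |ε|` of `M = ∏ (z - w) ^ k w * g` on `K`. Zeros are counted by a Jensen-type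
estimate instead of the argument principle: if `f` is holomorphic, `‖f‖ ≤ A` on the circle
`‖z - w‖ = R` and `f` has `m` zeros in the disc `‖z - w‖ ≤ r ≤ R / 2`, dividing out the linear
factors and using the maximum modulus principle gives `‖f‖ ≤ A (4r/R) ^ m` on that disc.
Away from the discs of a small radius `r` around the zeros of `M`, `‖M‖ ≳ r ^ N`, so `F` has no
zeros there; at `w + r` one has `‖F‖ ≳ r ^ k w`, which beats `A (4r/R) ^ (k w + 1)` for small `r`,
so `F` has at most `k w` zeros in the disc around `w`.
-/

open Metric Filter Topology

section NormedField

variable {𝕜 : Type*} [NormedField 𝕜]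

theorem pow_card_le_norm_prod_sub {T : Finset 𝕜} {z : 𝕜} {ρ : ℝ} (hρ : 0 ≤ ρ)
    (h : ∀ a ∈ T, ρ ≤ ‖z - a‖) : ρ ^ T.card ≤ ‖∏ a ∈ T, (z - a)‖ := by
  rw [norm_prod, ← Finset.prod_const]
  exact Finset.prod_le_prod (fun _ _ => hρ) h

theorem norm_prod_sub_le_pow_card {T : Finset 𝕜} {z : 𝕜} {ρ : ℝ}
    (h : ∀ a ∈ T, ‖z - a‖ ≤ ρ) : ‖∏ a ∈ T, (z - a)‖ ≤ ρ ^ T.card := by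
  rw [norm_prod, ← Finset.prod_const]
  exact Finset.prod_le_prod (fun _ _ => norm_nonneg _) h

theorem pow_sum_le_norm_prod_sub_pow {Z : Finset 𝕜} (k : 𝕜 → ℕ) {z : 𝕜} {ρ : ℝ} (hρ : 0 ≤ ρ)
    (h : ∀ w ∈ Z, ρ ≤ ‖z - w‖) : ρ ^ (∑ w ∈ Z, k w) ≤ ‖∏ w ∈ Z, (z - w) ^ k w‖ := by
  rw [norm_prod, ← Finset.prod_pow_eq_pow_sum]
  exact Finset.prod_le_prod (fun _ _ => pow_nonneg hρ _) fun w hw => by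
    rw [norm_pow]; exact pow_le_pow_left₀ hρ (h w hw) _

theorem pow_sum_mul_le_norm_prod_sub_pow {Z : Finset 𝕜} (k : 𝕜 → ℕ) {w z : 𝕜} (hw : w ∈ Z)
    {ρ : ℝ} (hρ : 0 ≤ ρ) (hρ1 : ρ ≤ 1) (h : ∀ w' ∈ Z, w' ≠ w → ρ ≤ ‖z - w'‖) :
    ρ ^ (∑ w' ∈ Z, k w') * ‖z - w‖ ^ k w ≤ ‖∏ w' ∈ Z, (z - w') ^ k w'‖ := by
  classical
  rw [← Finset.mul_prod_erase Z _ hw, norm_mul, norm_pow, mul_comm]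
  gcongr
  calc ρ ^ (∑ w' ∈ Z, k w') ≤ ρ ^ (∑ w' ∈ Z.erase w, k w') :=
        pow_le_pow_of_le_one hρ hρ1 (Finset.sum_le_sum_of_subset (Finset.erase_subset w Z))
    _ ≤ _ := pow_sum_le_norm_prod_sub_pow k hρ fun w' hw' =>
        h w' (Finset.mem_of_mem_erase hw') (Finset.ne_of_mem_erase hw')

theorem exists_mem_closedBall_of_norm_sub_lt {K : Set 𝕜} {F M g : 𝕜 → 𝕜} {Z : Finset 𝕜}
    (k : 𝕜 → ℕ) {γ r : ℝ} (hγ : 0 ≤ γ) (hr : 0 ≤ r) (hgγ : ∀ z ∈ K, γ ≤ ‖g z‖)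
    (hM : ∀ z ∈ K, M z = (∏ w ∈ Z, (z - w) ^ k w) * g z)
    (hFM : ∀ z ∈ K, ‖F z - M z‖ < γ * r ^ ∑ w ∈ Z, k w) {z : 𝕜} (hz : z ∈ K) (hFz : F z = 0) :
    ∃ w ∈ Z, z ∈ closedBall w r := by
  by_contra! hfar
  have hMz := hFM z hz
  rw [hFz, zero_sub, norm_neg, hM z hz, norm_mul, mul_comm γ] at hMz
  refine hMz.not_ge (mul_le_mul (pow_sum_le_norm_prod_sub_pow k hr fun w hw => ?_) (hgγ z hz)
    hγ (norm_nonneg _))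
  have hzw := hfar w hw
  rw [mem_closedBall, dist_eq_norm, not_le] at hzw
  exact hzw.le

end NormedField

theorem Set.ncard_le_sum_of_subset_biUnion {α ι : Type*} {s : Set α} {t : Finset ι}
    {u : ι → Set α} {k : ι → ℕ} (hs : s ⊆ ⋃ i ∈ t, u i) (hu : ∀ i ∈ t, (u i).encard ≤ k i) :
    s.ncard ≤ ∑ i ∈ t, k i := by
  have hs := (encard_le_encard hs).trans <| (t.set_encard_biUnion_le u).trans <|
    Finset.sum_le_sum hu
  rw [← Nat.cast_sum] at hs
  exact (encard_le_coe_iff_finite_ncard_le.mp hs).2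

theorem Finset.eventually_closedBall_subset_and_le_dist {X : Type*} [MetricSpace X] {U : Set X}
    (hU : IsOpen U) {Z : Finset X} (hZ : ↑Z ⊆ U) :
    ∀ᶠ R in 𝓝 (0 : ℝ), ∀ w ∈ Z, closedBall w R ⊆ U ∧
      ∀ z ∈ closedBall w R, ∀ w' ∈ Z, w' ≠ w → R ≤ dist z w' := by
  refine (eventually_all_finset Z).2 fun w hw => ?_
  have hsep : ∀ᶠ R in 𝓝 (0 : ℝ), ∀ w' ∈ Z, w' ≠ w → R ≤ dist w w' / 2 :=
    (eventually_all_finset Z).2 fun w' _ => by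
      by_cases hw' : w' = w
      · exact .of_forall fun _ h => absurd hw' h
      · exact (eventually_le_nhds (half_pos (dist_pos.mpr (Ne.symm hw')))).mono fun _ h _ => h
  filter_upwards [eventually_closedBall_subset (hU.mem_nhds (hZ hw)), hsep] with R hRU hRsep
  refine ⟨hRU, fun z hz w' hw' hne => ?_⟩
  linarith [hRsep w' hw' hne, dist_triangle w z w', mem_closedBall'.mp hz]

theorem Complex.exists_eq_prod_sub_mul_of_eq_zero {U : Set ℂ} (hU : IsOpen U) {f : ℂ → ℂ}
    (hf : DifferentiableOn ℂ f U) (T : Finset ℂ) (hTU : ↑T ⊆ U) (hT : ∀ a ∈ T, f a = 0) :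
    ∃ h : ℂ → ℂ, DifferentiableOn ℂ h U ∧ ∀ z ∈ U, f z = (∏ a ∈ T, (z - a)) * h z := by
  classical
  induction T using Finset.induction_on generalizing f with
  | empty => exact ⟨f, hf, fun z _ => by simp⟩
  | @insert a T haT ih =>
    have ha : a ∈ U := hTU (Finset.mem_insert_self a T)
    have hfa : ∀ z, f z = (z - a) * dslope f a z := fun z => by
      rw [← smul_eq_mul, sub_smul_dslope, hT a (Finset.mem_insert_self a T), sub_zero]
    obtain ⟨h, hh, hfh⟩ := ih ((Complex.differentiableOn_dslope (hU.mem_nhds ha)).mpr hf)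
      (fun b hb => hTU (Finset.mem_insert_of_mem hb)) fun b hb => by
        have hfb := hfa b
        rw [hT b (Finset.mem_insert_of_mem hb), eq_comm, mul_eq_zero, sub_eq_zero] at hfb
        exact hfb.resolve_left (ne_of_mem_of_not_mem hb haT)
    exact ⟨h, hh, fun z hz => by rw [hfa z, hfh z hz, Finset.prod_insert haT, mul_assoc]⟩

theorem Complex.norm_le_mul_pow_card_of_eq_zero {U : Set ℂ} (hU : IsOpen U) {f : ℂ → ℂ}
    (hf : DifferentiableOn ℂ f U) {w : ℂ} {r R A : ℝ} (hr : 0 < r) (hrR : 2 * r ≤ R)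
    (hRU : closedBall w R ⊆ U) (hA : ∀ z ∈ sphere w R, ‖f z‖ ≤ A)
    (T : Finset ℂ) (hTr : ↑T ⊆ closedBall w r) (hT : ∀ a ∈ T, f a = 0) :
    ∀ z ∈ closedBall w r, ‖f z‖ ≤ A * (4 * r / R) ^ T.card := by
  have hR : 0 < R := by linarith
  obtain ⟨h, hh, hfh⟩ := exists_eq_prod_sub_mul_of_eq_zero hU hf T
    ((hTr.trans (closedBall_subset_closedBall (by linarith))).trans hRU) hT
  have hsphere : ∀ z ∈ sphere w R, ‖h z‖ ≤ A / (R / 2) ^ T.card := by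
    intro z hz
    have hprod : (R / 2) ^ T.card ≤ ‖∏ a ∈ T, (z - a)‖ := by
      refine pow_card_le_norm_prod_sub (by positivity) fun a ha => ?_
      have := mem_closedBall.mp (hTr ha)
      rw [← dist_eq_norm]
      linarith [mem_sphere.mp hz, dist_triangle z a w]
    rw [le_div_iff₀ (by positivity)]
    calc ‖h z‖ * (R / 2) ^ T.card ≤ ‖h z‖ * ‖∏ a ∈ T, (z - a)‖ := by gcongr
      _ = ‖f z‖ := by rw [hfh z (hRU (sphere_subset_closedBall hz)), norm_mul, mul_comm]
      _ ≤ A := hA z hz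
  have hball : ∀ z ∈ closedBall w R, ‖h z‖ ≤ A / (R / 2) ^ T.card := by
    have hcl : DiffContOnCl ℂ h (ball w R) := by
      refine (hh.mono ?_).diffContOnCl
      rwa [closure_ball w hR.ne']
    intro z hz
    refine Complex.norm_le_of_forall_mem_frontier_norm_le isBounded_ball hcl ?_ ?_
    · rwa [frontier_ball w hR.ne']
    · rwa [closure_ball w hR.ne']
  intro z hz
  have hprod : ‖∏ a ∈ T, (z - a)‖ ≤ (2 * r) ^ T.card :=
    norm_prod_sub_le_pow_card fun a ha => by
      rw [← dist_eq_norm]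
      linarith [mem_closedBall.mp hz, mem_closedBall.mp (hTr ha), dist_triangle_right z a w]
  have hzR : z ∈ closedBall w R := closedBall_subset_closedBall (by linarith) hz
  calc ‖f z‖ = ‖∏ a ∈ T, (z - a)‖ * ‖h z‖ := by rw [hfh z (hRU hzR), norm_mul]
    _ ≤ (2 * r) ^ T.card * (A / (R / 2) ^ T.card) := by
        gcongr
        exact hball z hzR
    _ = A * (4 * r / R) ^ T.card := by
        rw [div_pow, div_pow, mul_pow, mul_pow, show (4 : ℝ) = 2 * 2 by norm_num, mul_pow]
        field_simp

theorem Complex.encard_zeros_le_of_lt_norm {U : Set ℂ} (hU : IsOpen U) {f : ℂ → ℂ}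
    (hf : DifferentiableOn ℂ f U) {w z₀ : ℂ} {r R A : ℝ} (hr : 0 < r) (hrR : 2 * r ≤ R)
    (hRU : closedBall w R ⊆ U) (hA : ∀ z ∈ sphere w R, ‖f z‖ ≤ A) {k : ℕ}
    (hz₀ : z₀ ∈ closedBall w r) (hfz₀ : A * (4 * r / R) ^ (k + 1) < ‖f z₀‖) :
    {z ∈ closedBall w r | f z = 0}.encard ≤ k := by
  by_contra! hk
  obtain ⟨t, hts, htk⟩ := Set.exists_subset_encard_eq (Order.add_one_le_of_lt hk)
  have ht : t.Finite := Set.finite_of_encard_eq_coe htk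
  have hcard : ht.toFinset.card = k + 1 := by
    rw [← Nat.cast_inj (R := ℕ∞), ← ht.encard_eq_coe_toFinset_card, htk, Nat.cast_succ]
  have := norm_le_mul_pow_card_of_eq_zero hU hf hr hrR hRU hA ht.toFinset
    (fun a ha => (hts (ht.mem_toFinset.mp ha)).1) (fun a ha => (hts (ht.mem_toFinset.mp ha)).2)
    z₀ hz₀
  rw [hcard] at this
  exact this.not_gt hfz₀

theorem exists_pos_mul_div_pow_succ_le {A c R : ℝ} (hA : 0 < A) (hc : 0 < c) (hR : 0 < R)
    (hR1 : R ≤ 1) (N : ℕ) :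
    ∃ r > 0, 2 * r ≤ R ∧ ∀ j ≤ N, A * (4 * r / R) ^ (j + 1) ≤ c / 2 * r ^ j := by
  set r := min (R / 2) (c / (2 * A * (4 / R) ^ (N + 1)))
  have hrc : A * (4 / R) ^ (N + 1) * r ≤ c / 2 := by
    have := min_le_right (R / 2) (c / (2 * A * (4 / R) ^ (N + 1)))
    rw [le_div_iff₀ (by positivity)] at this
    linarith
  have hrR : r ≤ R / 2 := min_le_left _ _
  refine ⟨r, lt_min (by linarith) (by positivity), by linarith, fun j hj => ?_⟩
  calc A * (4 * r / R) ^ (j + 1) = A * (4 / R) ^ (j + 1) * r * r ^ j := by ring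
    _ ≤ A * (4 / R) ^ (N + 1) * r * r ^ j := by
        gcongr
        rw [le_div_iff₀ hR]; linarith
    _ ≤ c / 2 * r ^ j := by gcongr

theorem Complex.encard_zeros_le_of_norm_sub_lt {U : Set ℂ} (hU : IsOpen U) {F M : ℂ → ℂ}
    (hF : DifferentiableOn ℂ F U) {w : ℂ} {r R A c : ℝ} {k : ℕ} (hr : 0 < r) (hrR : 2 * r ≤ R)
    (hRU : closedBall w R ⊆ U) (hA : ∀ z ∈ sphere w R, ‖F z‖ ≤ A)
    (hM : ∀ z ∈ closedBall w r, c * ‖z - w‖ ^ k ≤ ‖M z‖)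
    (hFM : ∀ z ∈ closedBall w r, ‖F z - M z‖ < c / 2 * r ^ k)
    (hgap : A * (4 * r / R) ^ (k + 1) ≤ c / 2 * r ^ k) :
    {z ∈ closedBall w r | F z = 0}.encard ≤ k := by
  have hz₀ : w + r ∈ closedBall w r := by simp [abs_of_pos hr]
  refine encard_zeros_le_of_lt_norm hU hF hr hrR hRU hA hz₀ ?_
  have hMz₀ := hM _ hz₀
  simp only [add_sub_cancel_left, Complex.norm_real, Real.norm_eq_abs, abs_of_pos hr] at hMz₀
  linarith [norm_le_norm_add_norm_sub' (M (w + r)) (F (w + r)), hFM _ hz₀,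
    norm_sub_rev (M (w + r)) (F (w + r))]

theorem ncard_zeros_le_of_norm_sub_lt {K : Set ℂ} (hK : IsCompact K) {M g : ℂ → ℂ}
    {Z : Finset ℂ} (k : ℂ → ℕ) (hZ : ↑Z ⊆ interior K) (hg : ContinuousOn g K)
    (hg0 : ∀ z ∈ K, g z ≠ 0) (hM : ∀ z ∈ K, M z = (∏ w ∈ Z, (z - w) ^ k w) * g z) :
    ∃ δ > 0, ∀ F : ℂ → ℂ, DifferentiableOn ℂ F (interior K) → (∀ z ∈ K, ‖F z - M z‖ < δ) →
      {z ∈ interior K | F z = 0}.ncard ≤ ∑ w ∈ Z, k w := by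
  set N := ∑ w ∈ Z, k w
  obtain ⟨γ, hγ, hgγ⟩ := hK.exists_forall_le' hg.norm fun z hz => norm_pos_iff.mpr (hg0 z hz)
  obtain ⟨A₀, hA₀⟩ := hK.exists_bound_of_continuousOn <|
    ((continuousOn_finsetProd Z fun w _ => by fun_prop).mul hg).congr hM
  have hRev := (Z.eventually_closedBall_subset_and_le_dist isOpen_interior hZ).and
    (eventually_le_nhds one_pos)
  obtain ⟨R, ⟨hRZ, hR1⟩, hR : 0 < R⟩ := ((hRev.filter_mono nhdsWithin_le_nhds).and
    (self_mem_nhdsWithin : Set.Ioi (0 : ℝ) ∈ 𝓝[>] 0)).exists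
  set c := γ * R ^ N
  have hnear : ∀ w ∈ Z, ∀ z ∈ closedBall w R, c * ‖z - w‖ ^ k w ≤ ‖M z‖ := by
    intro w hw z hz
    have hzK := interior_subset ((hRZ w hw).1 hz)
    have hprod := pow_sum_mul_le_norm_prod_sub_pow k hw hR.le hR1 fun w' hw' hne => by
      rw [← dist_eq_norm]; exact (hRZ w hw).2 z hz w' hw' hne
    rw [hM z hzK, norm_mul]
    calc c * ‖z - w‖ ^ k w = (R ^ N * ‖z - w‖ ^ k w) * γ := by ring
      _ ≤ _ := by gcongr; exact hgγ z hzK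
  obtain ⟨r, hr, hrR, hgap⟩ := exists_pos_mul_div_pow_succ_le (A := |A₀| + 1) (c := c)
    (by positivity) (by positivity) hR hR1 N
  have hδ : ∀ j ≤ N, c / 2 * r ^ N ≤ c / 2 * r ^ j := fun j hj =>
    mul_le_mul_of_nonneg_left (pow_le_pow_of_le_one hr.le (by linarith) hj) (by positivity)
  refine ⟨min 1 (c / 2 * r ^ N), by positivity, fun F hF hFM => ?_⟩
  have hFM' : ∀ z ∈ K, ‖F z - M z‖ < c / 2 * r ^ N := fun z hz =>
    (hFM z hz).trans_le (min_le_right _ _)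
  have hloc : {z ∈ interior K | F z = 0} ⊆ ⋃ w ∈ Z, {z ∈ closedBall w r | F z = 0} := by
    rintro z ⟨hz, hFz⟩
    have hcγ : c ≤ γ := mul_le_of_le_one_right hγ.le (pow_le_one₀ hR.le hR1)
    have hδγ : c / 2 * r ^ N ≤ γ * r ^ N := by gcongr; linarith
    obtain ⟨w, hw, hzw⟩ := exists_mem_closedBall_of_norm_sub_lt k hγ.le hr.le hgγ hM
      (fun z hz => (hFM' z hz).trans_le hδγ) (interior_subset hz) hFz
    exact Set.mem_biUnion hw ⟨hzw, hFz⟩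
  have hcount : ∀ w ∈ Z, {z ∈ closedBall w r | F z = 0}.encard ≤ k w := by
    intro w hw
    have hkN : k w ≤ N := Finset.single_le_sum (fun _ _ => Nat.zero_le _) hw
    have hrK : closedBall w r ⊆ K :=
      (closedBall_subset_closedBall (by linarith)).trans ((hRZ w hw).1.trans interior_subset)
    refine Complex.encard_zeros_le_of_norm_sub_lt isOpen_interior hF hr hrR (hRZ w hw).1
      (fun z hz => ?_) (fun z hz => hnear w hw z (closedBall_subset_closedBall (by linarith) hz))
      (fun z hz => (hFM' z (hrK hz)).trans_le (hδ _ hkN)) (hgap _ hkN)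
    have hzK := interior_subset ((hRZ w hw).1 (sphere_subset_closedBall hz))
    linarith [norm_le_norm_add_norm_sub' (F z) (M z), hA₀ z hzK, le_abs_self A₀, hFM z hzK,
      min_le_left 1 (c / 2 * r ^ N)]
  exact Set.ncard_le_sum_of_subset_biUnion hloc hcount

theorem norm_div_pow_sub_le {a b m : ℂ} {ε C : ℝ} (hε : ε ≠ 0) {n : ℕ}
    (h : ‖a - (b + (ε : ℂ) ^ n * m)‖ ≤ C * |ε| ^ (n + 1)) :
    ‖(a - b) / (ε : ℂ) ^ n - m‖ ≤ C * |ε| := by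
  have hεn : (ε : ℂ) ^ n ≠ 0 := pow_ne_zero _ (Complex.ofReal_ne_zero.mpr hε)
  have hpos : 0 < |ε| ^ n := pow_pos (abs_pos.mpr hε) n
  rw [show (a - b) / (ε : ℂ) ^ n - m = (a - (b + (ε : ℂ) ^ n * m)) / (ε : ℂ) ^ n by
    field_simp; ring, norm_div, norm_pow, Complex.norm_real, Real.norm_eq_abs,
    div_le_iff₀ hpos]
  calc _ ≤ C * |ε| ^ (n + 1) := h
    _ = C * |ε| * |ε| ^ n := by ring

theorem zeros_bound_by_leading_term_general
    (K : Set ℂ) (hK : IsCompact K)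
    (V : Set ℂ) (hKV : K ⊆ V)
    (M : ℂ → ℂ)
    (N : ℕ) (Z : Finset ℂ) (k : ℂ → ℕ) (g : ℂ → ℂ)
    (hZint : ↑Z ⊆ interior K)
    (hg : AnalyticOnNhd ℂ g V) (hgne : ∀ z ∈ K, g z ≠ 0)
    (hfac : ∀ z ∈ K, M z = (∏ w ∈ Z, (z - w) ^ k w) * g z)
    (hsum : ∑ w ∈ Z, k w = N)
    (n : ℕ)
    (d : ℂ → ℝ → ℂ) (ε₀ C : ℝ) (hε₀ : 0 < ε₀)
    (hd : ∀ ε : ℝ, |ε| < ε₀ → AnalyticOnNhd ℂ (fun z => d z ε) V)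
    (happrox : ∀ ε : ℝ, |ε| < ε₀ → ∀ z ∈ K,
      ‖d z ε - (z + (ε : ℂ) ^ n * M z)‖ ≤ C * |ε| ^ (n + 1)) :
    ∃ ε₁ > 0, ∀ ε : ℝ, 0 < |ε| → |ε| < ε₁ →
      {z ∈ interior K | d z ε = z}.ncard ≤ N := by
  obtain ⟨δ, hδ, hzeros⟩ :=
    ncard_zeros_le_of_norm_sub_lt hK k hZint (hg.continuousOn.mono hKV) hgne hfac
  refine ⟨min ε₀ (δ / (|C| + 1)), lt_min hε₀ (by positivity), fun ε hε hεε₁ => ?_⟩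
  have hεε₀ : |ε| < ε₀ := hεε₁.trans_le (min_le_left _ _)
  have hCε : C * |ε| < δ := by
    have := hεε₁.trans_le (min_le_right _ _)
    rw [lt_div_iff₀ (by positivity)] at this
    nlinarith [le_abs_self C, abs_nonneg ε]
  have hεn : (ε : ℂ) ^ n ≠ 0 := pow_ne_zero _ (Complex.ofReal_ne_zero.mpr (abs_pos.mp hε))
  have hfix : {z ∈ interior K | d z ε = z} =
      {z ∈ interior K | (d z ε - z) / (ε : ℂ) ^ n = 0} := by
    simp only [div_eq_zero_iff, hεn, or_false, sub_eq_zero]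
  rw [hfix, ← hsum]
  refine hzeros _ ?_ fun z hz =>
    (norm_div_pow_sub_le (abs_pos.mp hε) (happrox ε hεε₀ z hz)).trans_lt hCε
  exact (((hd ε hεε₀).differentiableOn.sub differentiableOn_id).div_const _).mono
    (interior_subset.trans hKV)

/-- If d(z,ε) = z + ε^n·M(z) + O(ε^{n+1}) uniformly on a compact K, M analytic and not
identically zero on a connected open neighborhood V of K, with exactly N zeros (with
multiplicity, encoded by a factorization) in the interior of K and none on the boundary,
then for all sufficiently small ε ≠ 0 the map z ↦ d(z,ε) − z has at most N zeros in the
interior of K. -/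
theorem zeros_bound_by_leading_term
    (K : Set ℂ) (hK : IsCompact K) (hKint : (K = closure (interior K)))
    (V : Set ℂ) (hVo : IsOpen V) (hVc : IsConnected V) (hKV : K ⊆ V)
    (M : ℂ → ℂ) (hM : AnalyticOnNhd ℂ M V) (hMne : ∃ z ∈ V, M z ≠ 0)
    (N : ℕ) (Z : Finset ℂ) (k : ℂ → ℕ) (g : ℂ → ℂ)
    (hZ : ∀ z ∈ K, (M z = 0 ↔ z ∈ Z)) (hZint : ↑Z ⊆ interior K)
    (hg : AnalyticOnNhd ℂ g V) (hgne : ∀ z ∈ K, g z ≠ 0)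
    (hfac : ∀ z ∈ K, M z = (∏ w ∈ Z, (z - w) ^ k w) * g z)
    (hsum : ∑ w ∈ Z, k w = N)
    (n : ℕ) (hn : 1 ≤ n)
    (d : ℂ → ℝ → ℂ) (ε₀ C : ℝ) (hε₀ : 0 < ε₀)
    (hd : ∀ ε : ℝ, |ε| < ε₀ → AnalyticOnNhd ℂ (fun z => d z ε) V)
    (happrox : ∀ ε : ℝ, |ε| < ε₀ → ∀ z ∈ K,
      ‖d z ε - (z + (ε : ℂ) ^ n * M z)‖ ≤ C * |ε| ^ (n + 1)) :
    ∃ ε₁ > 0, ∀ ε : ℝ, 0 < |ε| → |ε| < ε₁ →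
      {z ∈ interior K | d z ε = z}.ncard ≤ N :=
  zeros_bound_by_leading_term_general K hK V hKV M N Z k g hZint hg hgne hfac hsum n d ε₀ C hε₀ hd
    happrox
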